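/- arXiv:1710.10397 — 6 statements merged into one kernel-verified Lean document; each statement's English description precedes it below -/
import Mathlib

section
/- The inner product of the IIP direction vector with the current position direction satisfies ⟪i_p, i_r⟫ = cos φ; that is, the angle of flight from the current position to the instantaneous impact point equals φ. -/
open scoped RealInnerProductSpace

/-- The angle of flight from the current position to the IIP equals φ. -/
theorem iip_inner_position
    {E : Type*} [NormedAddCommGroup E] [InnerProductSpace ℝ E]
    (γ φ : ℝ) (hγ : Real.cos γ ≠ 0)
    (i_r i_v : E) (hr : ‖i_r‖ = 1) (hv : ‖i_v‖ = 1)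
    (hrv : ⟪i_r, i_v⟫ = Real.sin γ) :
    ⟪(Real.cos (γ + φ) / Real.cos γ) • i_r + (Real.sin φ / Real.cos γ) • i_v, i_r⟫
      = Real.cos φ := by
  have hrr : ⟪i_r, i_r⟫ = (1 : ℝ) := by
    rw [real_inner_self_eq_norm_sq, hr]; norm_num
  have hvr : ⟪i_v, i_r⟫ = Real.sin γ := by rw [real_inner_comm, hrv]
  rw [inner_add_left, real_inner_smul_left, real_inner_smul_left, hrr, hvr]
  rw [Real.cos_add]
  field_simp
  ring
end

section
/- Suppose the angle of flight φ, viewed as a function of the current speed v, is differentiable at v₀ with derivative φ' and satisfies the implicit relation μ(1 − cos(φ v))/(r₀ v²) + cos(φ v + γ) cos γ = (r₀/r_p) cos²γ for all v in a neighborhood of v₀. If D₁ := μ sin(φ v₀)/(r₀ v₀²) − (1/2)(sin(2γ + φ v₀) + sin(φ v₀)) is nonzero, then φ' = (2μ(1 − cos(φ v₀))/(r₀ v₀³)) / D₁. -/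
/-- Sensitivity of the angle of flight to the current speed (Eq. (35)). -/
theorem flight_angle_speed_sensitivity
    (μ r₀ r_p : ℝ) (hμ : 0 < μ) (hr₀ : 0 < r₀) (hrp : 0 < r_p)
    (γ v₀ : ℝ) (hv₀ : 0 < v₀)
    (φ : ℝ → ℝ) (φ' : ℝ) (hφ : HasDerivAt φ φ' v₀)
    (himp : ∀ᶠ v in nhds v₀,
      μ * (1 - Real.cos (φ v)) / (r₀ * v ^ 2) + Real.cos (φ v + γ) * Real.cos γ
        = (r₀ / r_p) * Real.cos γ ^ 2)
    (hD₁ : μ * Real.sin (φ v₀) / (r₀ * v₀ ^ 2)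
        - (1 / 2) * (Real.sin (2 * γ + φ v₀) + Real.sin (φ v₀)) ≠ 0) :
    φ' = (2 * μ * (1 - Real.cos (φ v₀)) / (r₀ * v₀ ^ 3))
        / (μ * Real.sin (φ v₀) / (r₀ * v₀ ^ 2)
            - (1 / 2) * (Real.sin (2 * γ + φ v₀) + Real.sin (φ v₀))) := by
  have hv₀' : v₀ ≠ 0 := ne_of_gt hv₀
  have hr₀' : r₀ ≠ 0 := ne_of_gt hr₀
  have hden : r₀ * v₀ ^ 2 ≠ 0 := by positivity
  have h1 : HasDerivAt (fun v => μ * (1 - Real.cos (φ v)))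
      (μ * (0 - -Real.sin (φ v₀) * φ')) v₀ :=
    ((hasDerivAt_const v₀ (1 : ℝ)).sub hφ.cos).const_mul μ
  have h2 : HasDerivAt (fun v => r₀ * v ^ 2) (r₀ * (2 * v₀ ^ 1)) v₀ := by
    simpa using (hasDerivAt_pow 2 v₀).const_mul r₀
  have h3 : HasDerivAt (fun v => Real.cos (φ v + γ) * Real.cos γ)
      (-Real.sin (φ v₀ + γ) * φ' * Real.cos γ) v₀ :=
    (hφ.add_const γ).cos.mul_const _
  have hf := (h1.div h2 hden).add h3
  have hconst : HasDerivAt (fun _ : ℝ => (r₀ / r_p) * Real.cos γ ^ 2)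
      ((μ * (0 - -Real.sin (φ v₀) * φ') * (r₀ * v₀ ^ 2)
        - μ * (1 - Real.cos (φ v₀)) * (r₀ * (2 * v₀ ^ 1))) / (r₀ * v₀ ^ 2) ^ 2
        + -Real.sin (φ v₀ + γ) * φ' * Real.cos γ) v₀ :=
    hf.congr_of_eventuallyEq (himp.mono fun v h => h.symm)
  have hD : (μ * (0 - -Real.sin (φ v₀) * φ') * (r₀ * v₀ ^ 2)
        - μ * (1 - Real.cos (φ v₀)) * (r₀ * (2 * v₀ ^ 1))) / (r₀ * v₀ ^ 2) ^ 2
        + -Real.sin (φ v₀ + γ) * φ' * Real.cos γ = 0 :=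
    hconst.unique (hasDerivAt_const _ _)
  have hs : Real.sin (2 * γ + φ v₀) + Real.sin (φ v₀)
      = 2 * (Real.sin (φ v₀ + γ) * Real.cos γ) := by
    have h := Real.sin_sq_add_cos_sq γ
    rw [Real.sin_add, Real.sin_add, Real.sin_two_mul, Real.cos_two_mul]
    nlinarith [h]
  rw [eq_div_iff hD₁, hs]
  field_simp at hD ⊢
  nlinarith [hD, sq_nonneg v₀]
end

section
/- Suppose the angle of flight φ, viewed as a function of the flight path angle γ, is differentiable at γ₀ with derivative φ' and satisfies the implicit relation μ(1 − cos(φ γ))/(r₀ v₀²) + cos(φ γ + γ) cos γ = (r₀/r_p) cos²γ for all γ in a neighborhood of γ₀. If D₁ := μ sin(φ γ₀)/(r₀ v₀²) − (1/2)(sin(2γ₀ + φ γ₀) + sin(φ γ₀)) is nonzero, then φ' = (sin(2γ₀ + φ γ₀) − (r₀/r_p) sin(2γ₀)) / D₁. -/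
/-!
Differentiate the implicit relation at `γ₀`. By the product-to-sum formulas the derivative of
`cos (φ γ + γ) * cos γ` is `-(φ' / 2) (sin (2γ₀ + φ γ₀) + sin (φ γ₀)) - sin (2γ₀ + φ γ₀)`, so the
derivative of the relation is `φ' D₁ - (sin (2γ₀ + φ γ₀) - (r₀ / r_p) sin (2γ₀))`. It vanishes because
the relation holds near `γ₀`, and dividing by `D₁ ≠ 0` gives `φ'`.
-/

open Real Filter Topology

-- `c` plays the role of `μ / (r₀ v₀²)` and `k` that of `r₀ / r_p`.
noncomputable def flightAngleResidual (c k : ℝ) (φ : ℝ → ℝ) (γ : ℝ) : ℝ :=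
  c * (1 - cos (φ γ)) + cos (φ γ + γ) * cos γ - k * cos γ ^ 2

lemma sin_add_mul_cos (a b : ℝ) : sin (a + b) * cos b = (sin (a + 2 * b) + sin a) / 2 := by
  have h := two_mul_sin_mul_cos (a + b) b
  rw [add_sub_cancel_right, add_assoc, ← two_mul] at h
  linarith

lemma cos_add_mul_sin (a b : ℝ) : cos (a + b) * sin b = (sin (a + 2 * b) - sin a) / 2 := by
  have h := two_mul_sin_mul_cos b (a + b)
  rw [show b - (a + b) = -a by ring, show b + (a + b) = a + 2 * b by ring, sin_neg] at h
  linarith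

theorem hasDerivAt_flightAngleResidual (c k : ℝ) {φ : ℝ → ℝ} {φ' γ : ℝ}
    (hφ : HasDerivAt φ φ' γ) :
    HasDerivAt (flightAngleResidual c k φ)
      (φ' * (c * sin (φ γ) - (sin (2 * γ + φ γ) + sin (φ γ)) / 2)
        - (sin (2 * γ + φ γ) - k * sin (2 * γ))) γ := by
  have hsum : HasDerivAt (fun x ↦ φ x + x) (φ' + 1) γ := hφ.add (hasDerivAt_id γ)
  have h := ((((hasDerivAt_const γ 1).sub hφ.cos).const_mul c).add
    (hsum.cos.mul (hasDerivAt_cos γ))).sub (((hasDerivAt_cos γ).pow 2).const_mul k)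
  refine h.congr_deriv ?_
  rw [add_comm (2 * γ), sin_two_mul]
  push_cast
  linear_combination -(φ' + 1) * sin_add_mul_cos (φ γ) γ - cos_add_mul_sin (φ γ) γ

theorem flightAngle_deriv_mul_eq {c k : ℝ} {φ : ℝ → ℝ} {φ' γ₀ : ℝ}
    (hφ : HasDerivAt φ φ' γ₀) (hres : ∀ᶠ γ in 𝓝 γ₀, flightAngleResidual c k φ γ = 0) :
    φ' * (c * sin (φ γ₀) - (sin (2 * γ₀ + φ γ₀) + sin (φ γ₀)) / 2)
      = sin (2 * γ₀ + φ γ₀) - k * sin (2 * γ₀) := by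
  have hzero := ((hasDerivAt_flightAngleResidual c k hφ).congr_of_eventuallyEq
    (hres.mono fun _ h ↦ h.symm)).unique (hasDerivAt_const γ₀ (0 : ℝ))
  linarith

theorem flight_angle_gamma_sensitivity_general
    (μ r₀ r_p : ℝ)
    (v₀ : ℝ) (γ₀ : ℝ)
    (φ : ℝ → ℝ) (φ' : ℝ) (hφ : HasDerivAt φ φ' γ₀)
    (himp : ∀ᶠ γ in nhds γ₀,
      μ * (1 - Real.cos (φ γ)) / (r₀ * v₀ ^ 2) + Real.cos (φ γ + γ) * Real.cos γ
        = (r₀ / r_p) * Real.cos γ ^ 2)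
    (hD₁ : μ * Real.sin (φ γ₀) / (r₀ * v₀ ^ 2)
        - (1 / 2) * (Real.sin (2 * γ₀ + φ γ₀) + Real.sin (φ γ₀)) ≠ 0) :
    φ' = (Real.sin (2 * γ₀ + φ γ₀) - (r₀ / r_p) * Real.sin (2 * γ₀))
        / (μ * Real.sin (φ γ₀) / (r₀ * v₀ ^ 2)
            - (1 / 2) * (Real.sin (2 * γ₀ + φ γ₀) + Real.sin (φ γ₀))) := by
  have hres : ∀ᶠ γ in 𝓝 γ₀, flightAngleResidual (μ / (r₀ * v₀ ^ 2)) (r₀ / r_p) φ γ = 0 :=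
    himp.mono fun γ h ↦ by rw [flightAngleResidual, div_mul_eq_mul_div, h, sub_self]
  rw [eq_div_iff hD₁, ← flightAngle_deriv_mul_eq hφ hres]
  ring

/-- Sensitivity of the angle of flight to the flight path angle (Eq. (36)). -/
theorem flight_angle_gamma_sensitivity
    (μ r₀ r_p : ℝ) (hμ : 0 < μ) (hr₀ : 0 < r₀) (hrp : 0 < r_p)
    (v₀ : ℝ) (hv₀ : 0 < v₀) (γ₀ : ℝ)
    (φ : ℝ → ℝ) (φ' : ℝ) (hφ : HasDerivAt φ φ' γ₀)
    (himp : ∀ᶠ γ in nhds γ₀,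
      μ * (1 - Real.cos (φ γ)) / (r₀ * v₀ ^ 2) + Real.cos (φ γ + γ) * Real.cos γ
        = (r₀ / r_p) * Real.cos γ ^ 2)
    (hD₁ : μ * Real.sin (φ γ₀) / (r₀ * v₀ ^ 2)
        - (1 / 2) * (Real.sin (2 * γ₀ + φ γ₀) + Real.sin (φ γ₀)) ≠ 0) :
    φ' = (Real.sin (2 * γ₀ + φ γ₀) - (r₀ / r_p) * Real.sin (2 * γ₀))
        / (μ * Real.sin (φ γ₀) / (r₀ * v₀ ^ 2)
            - (1 / 2) * (Real.sin (2 * γ₀ + φ γ₀) + Real.sin (φ γ₀))) :=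
  flight_angle_gamma_sensitivity_general μ r₀ r_p v₀ γ₀ φ φ' hφ himp hD₁
end

section
/- Let p : ℝ → ℝ³ be differentiable at t with derivative ṗ, with ‖p(s)‖ = r_p for all s (r_p > 0 constant). Write i_p := p(t)/r_p = (i_px, i_py, i_pz) and assume ρ := √(i_px² + i_py²) > 0. Define i_E := (1/ρ) · (−i_py, i_px, 0) and i_N := i_p × i_E. Then the latitude Lat(s) := arcsin(p_z(s)/r_p) is differentiable at t with derivative ⟪ṗ, i_N⟫ / r_p. -/
/-!
With `u = p(t) / r_p` a unit vector, the East vector is `(e_z × u) / ρ`, so by the BAC–CAB rule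
`i_N = u × (e_z × u) / ρ = (e_z - u_z u) / ρ`. Differentiating `‖p‖² = r_p²` gives `⟪p, ṗ⟫ = 0`,
hence `⟪ṗ, i_N⟫ = ṗ_z / ρ`. On the other side, the chain rule for `arcsin` gives the derivative
`ṗ_z / (r_p √(1 - u_z²))`, and `1 - u_z² = u_x² + u_y² = ρ²` because `‖u‖ = 1`.
-/

open Matrix
open scoped RealInnerProductSpace

theorem zAxis_cross {R : Type*} [CommRing R] (u : Fin 3 → R) :
    ![0, 0, 1] ⨯₃ u = ![-u 1, u 0, 0] := by
  simp [cross_apply]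

theorem EuclideanSpace.inner_toLp_cross_smul_zAxis_cross (u v : EuclideanSpace ℝ (Fin 3))
    (c : ℝ) :
    ⟪v, WithLp.toLp 2 (WithLp.ofLp u ⨯₃ (c • ![-u 1, u 0, 0]))⟫ =
      c * (‖u‖ ^ 2 * v 2 - u 2 * ⟪u, v⟫) := by
  have hz (w : Fin 3 → ℝ) : ![0, 0, 1] ⬝ᵥ w = w 2 := by simp [dotProduct, Fin.sum_univ_three]
  rw [← zAxis_cross, map_smul, cross_cross_eq_smul_sub_smul', ← real_inner_self_eq_norm_sq]
  simp only [EuclideanSpace.inner_eq_star_dotProduct, star_trivial, smul_dotProduct,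
    sub_dotProduct, smul_eq_mul, hz, dotProduct_comm (WithLp.ofLp v)]

theorem inner_eq_zero_of_hasDerivAt_of_norm_eventuallyEq {F : Type*} [NormedAddCommGroup F]
    [InnerProductSpace ℝ F] {f : ℝ → F} {f' : F} {t c : ℝ} (hf : HasDerivAt f f' t)
    (hc : ∀ᶠ s in nhds t, ‖f s‖ = c) : ⟪f t, f'⟫ = 0 := by
  have hconst : HasDerivAt (‖f ·‖ ^ 2) 0 t :=
    (hasDerivAt_const t (c ^ 2)).congr_of_eventuallyEq (hc.mono fun s hs => by simp [hs])
  have h := hf.norm_sq.unique hconst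
  linarith

theorem HasDerivAt.arcsin {f : ℝ → ℝ} {f' t : ℝ} (hf : HasDerivAt f f' t)
    (ht : 0 < 1 - f t ^ 2) :
    HasDerivAt (fun s => Real.arcsin (f s)) (f' / √(1 - f t ^ 2)) t := by
  have hlt : |f t| < 1 := by rw [← sq_lt_one_iff_abs_lt_one]; linarith
  have h := (Real.hasDerivAt_arcsin (abs_lt.1 hlt).1.ne' (abs_lt.1 hlt).2.ne).comp t hf
  rwa [one_div_mul_eq_div] at h

/-- Latitude rate formula (Eq. (47)): the derivative of the IIP latitude is
⟪p', i_N⟫ / r_p, where i_N = i_p × i_E is the local North direction. -/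
theorem latitude_rate
    (r_p : ℝ) (hrp : 0 < r_p)
    (p : ℝ → EuclideanSpace ℝ (Fin 3)) (p' : EuclideanSpace ℝ (Fin 3)) (t : ℝ)
    (hp : HasDerivAt p p' t)
    (hnorm : ∀ s, ‖p s‖ = r_p)
    (hρ : 0 < Real.sqrt ((p t 0 / r_p) ^ 2 + (p t 1 / r_p) ^ 2)) :
    HasDerivAt (fun s => Real.arcsin (p s 2 / r_p))
      (⟪p', (WithLp.toLp 2 ((WithLp.ofLp ((1 / r_p) • p t)) ⨯₃
          ((1 / Real.sqrt ((p t 0 / r_p) ^ 2 + (p t 1 / r_p) ^ 2)) •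
            ![-(p t 1 / r_p), p t 0 / r_p, 0])) : EuclideanSpace ℝ (Fin 3))⟫ / r_p)
      t := by
  set u : EuclideanSpace ℝ (Fin 3) := (1 / r_p) • p t with hu
  have hu_apply (i : Fin 3) : u i = p t i / r_p := by simp [hu, div_eq_inv_mul]
  have hu_norm : ‖u‖ = 1 := by
    rw [hu, norm_smul, hnorm t, norm_div, norm_one, Real.norm_of_nonneg hrp.le,
      one_div_mul_cancel hrp.ne']
  have hu_orth : ⟪u, p'⟫ = 0 := by
    rw [hu, real_inner_smul_left, mul_eq_zero_of_right _
      (inner_eq_zero_of_hasDerivAt_of_norm_eventuallyEq hp (.of_forall hnorm))]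
  have hρ_sq : (p t 0 / r_p) ^ 2 + (p t 1 / r_p) ^ 2 = 1 - (p t 2 / r_p) ^ 2 := by
    have h := EuclideanSpace.real_norm_sq_eq u
    rw [hu_norm, Fin.sum_univ_three, hu_apply, hu_apply, hu_apply] at h
    linarith
  rw [hρ_sq] at hρ ⊢
  rw [← hu_apply 0, ← hu_apply 1, EuclideanSpace.inner_toLp_cross_smul_zAxis_cross, hu_norm,
    hu_orth]
  have hz : HasDerivAt (fun s => p s 2 / r_p) (p' 2 / r_p) t :=
    ((EuclideanSpace.proj 2).hasFDerivAt.comp_hasDerivAt t hp).div_const r_p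
  convert hz.arcsin (Real.sqrt_pos.1 hρ) using 1
  ring
end

section
/- Let p : ℝ → ℝ³ be differentiable at t with derivative ṗ, with ‖p(s)‖ = r_p for all s (r_p > 0 constant). Write i_p := p(t)/r_p = (i_px, i_py, i_pz) and assume ρ := √(i_px² + i_py²) > 0. Define i_E := (1/ρ) · (−i_py, i_px, 0) and Lat(t) := arcsin(i_pz). If Lon : ℝ → ℝ is differentiable at t with derivative L and satisfies p_x(s) = r_p ρ(s) cos(Lon s) and p_y(s) = r_p ρ(s) sin(Lon s) near t (where ρ(s) := √(p_x(s)² + p_y(s)²)/r_p), then L = ⟪ṗ, i_E⟫ / (r_p cos(Lat(t))). -/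
open scoped RealInnerProductSpace

open Real Filter Topology

/-!
Projected to the equatorial plane, `p = R (cos Lon, sin Lon)` with `R = √(p₀² + p₁²) = r_p ρ`, so
differentiating gives the angular-momentum identity `p₀ ṗ₁ - p₁ ṗ₀ = R² · Lon'`. Its left side is
`r_p ρ ⟪ṗ, i_E⟫`, and on the sphere `cos (arcsin (p₂ / r_p)) = ρ`; dividing by `r_p ρ` gives the formula.
-/

theorem mul_deriv_sub_mul_deriv_eq_sq_mul_of_polar {x y r θ : ℝ → ℝ} {x' y' r' L t : ℝ}
    (hx : HasDerivAt x x' t) (hy : HasDerivAt y y' t) (hr : HasDerivAt r r' t)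
    (hθ : HasDerivAt θ L t)
    (hpolar : ∀ᶠ s in 𝓝 t, x s = r s * cos (θ s) ∧ y s = r s * sin (θ s)) :
    x t * y' - y t * x' = r t ^ 2 * L := by
  have hx' : x' = r' * cos (θ t) + r t * (-sin (θ t) * L) :=
    hx.unique ((hr.mul hθ.cos).congr_of_eventuallyEq (hpolar.mono fun _ hs => hs.1))
  have hy' : y' = r' * sin (θ t) + r t * (cos (θ t) * L) :=
    hy.unique ((hr.mul hθ.sin).congr_of_eventuallyEq (hpolar.mono fun _ hs => hs.2))
  obtain ⟨hxt, hyt⟩ := hpolar.self_of_nhds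
  rw [hx', hy', hxt, hyt]
  linear_combination r t ^ 2 * L * sin_sq_add_cos_sq (θ t)

theorem EuclideanSpace.norm_sq_eq_fin_three (v : EuclideanSpace ℝ (Fin 3)) :
    ‖v‖ ^ 2 = v 0 ^ 2 + v 1 ^ 2 + v 2 ^ 2 := by
  simp [EuclideanSpace.norm_sq_eq, Fin.sum_univ_three]

theorem EuclideanSpace.cos_arcsin_two_div_of_norm_eq {v : EuclideanSpace ℝ (Fin 3)} {r : ℝ}
    (hr : 0 < r) (hv : ‖v‖ = r) : cos (arcsin (v 2 / r)) = √((v 0 / r) ^ 2 + (v 1 / r) ^ 2) := by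
  have hsq := v.norm_sq_eq_fin_three
  rw [hv] at hsq
  rw [cos_arcsin]
  congr 1
  field_simp
  linarith

theorem EuclideanSpace.inner_toLp_smul_rot90 (v : EuclideanSpace ℝ (Fin 3)) (c a b : ℝ) :
    ⟪v, (WithLp.toLp 2 (c • ![-b, a, 0]) : EuclideanSpace ℝ (Fin 3))⟫ = c * (a * v 1 - b * v 0) := by
  simp only [Matrix.smul_cons, smul_eq_mul, mul_neg, mul_zero, Matrix.smul_empty, PiLp.inner_apply,
    RCLike.inner_apply, Real.ringHom_apply, Fin.sum_univ_three, Matrix.cons_val_zero, Matrix.cons_val_one,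
    Matrix.cons_val, zero_mul, add_zero]
  ring

theorem sqrt_div_sq_add_div_sq {a b r : ℝ} (hr : 0 < r) :
    √((a / r) ^ 2 + (b / r) ^ 2) = √(a ^ 2 + b ^ 2) / r := by
  rw [div_pow, div_pow, ← add_div, sqrt_div' _ (sq_nonneg r), sqrt_sq hr.le]

/-- Longitude rate formula (Eq. (48)): the derivative of the IIP longitude is
⟪p', i_E⟫ / (r_p cos(Lat)), where i_E is the local East direction. -/
theorem longitude_rate
    (r_p : ℝ) (hrp : 0 < r_p)
    (p : ℝ → EuclideanSpace ℝ (Fin 3)) (p' : EuclideanSpace ℝ (Fin 3)) (t : ℝ)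
    (hp : HasDerivAt p p' t)
    (hnorm : ∀ s, ‖p s‖ = r_p)
    (hρ : 0 < Real.sqrt ((p t 0 / r_p) ^ 2 + (p t 1 / r_p) ^ 2))
    (Lon : ℝ → ℝ) (L : ℝ) (hLon : HasDerivAt Lon L t)
    (hpolar : ∀ᶠ s in nhds t,
      p s 0 = r_p * (Real.sqrt ((p s 0) ^ 2 + (p s 1) ^ 2) / r_p) * Real.cos (Lon s) ∧
      p s 1 = r_p * (Real.sqrt ((p s 0) ^ 2 + (p s 1) ^ 2) / r_p) * Real.sin (Lon s)) :
    L = ⟪p', ((WithLp.toLp 2 ((1 / Real.sqrt ((p t 0 / r_p) ^ 2 + (p t 1 / r_p) ^ 2)) •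
          ![-(p t 1 / r_p), p t 0 / r_p, 0]) : EuclideanSpace ℝ (Fin 3)))⟫
        / (r_p * Real.cos (Real.arcsin (p t 2 / r_p))) := by
  have hcoord (i : Fin 3) : HasDerivAt (fun s => p s i) (p' i) t :=
    (EuclideanSpace.proj (𝕜 := ℝ) i).hasFDerivAt.comp_hasDerivAt t hp
  set ρ := √((p t 0 / r_p) ^ 2 + (p t 1 / r_p) ^ 2) with hρ_def
  set R : ℝ → ℝ := fun s => √(p s 0 ^ 2 + p s 1 ^ 2)
  have hRt : R t = r_p * ρ := by
    rw [hρ_def, sqrt_div_sq_add_div_sq hrp, mul_div_cancel₀ _ hrp.ne']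
  have hRpos : 0 < R t := by rw [hRt]; positivity
  have hR : HasDerivAt R _ t :=
    (((hcoord 0).fun_pow 2).fun_add ((hcoord 1).fun_pow 2)).sqrt (sqrt_pos.mp hRpos).ne'
  have hcross := mul_deriv_sub_mul_deriv_eq_sq_mul_of_polar (hcoord 0) (hcoord 1) hR hLon
    (by simpa only [mul_div_cancel₀ _ hrp.ne'] using hpolar)
  rw [hRt] at hcross
  rw [EuclideanSpace.inner_toLp_smul_rot90,
    EuclideanSpace.cos_arcsin_two_div_of_norm_eq hrp (hnorm t), ← hρ_def]
  field_simp
  linear_combination -hcross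
end

section
/- The sensitivity vectors d_r and d_θ of the inertial IIP rate with respect to the radial and tangential acceleration components are linearly dependent; precisely, D_θ^φ • d_r = D_r^φ • d_θ, where d_r := (1/h)·(−(h sin φ + w cos φ)·D_r^φ · i_r + r₀v₀ cos φ · D_r^φ · i_v) and d_θ := ((r₀ cos φ − (h sin φ + w cos φ)·D_θ^φ)/h) · i_r + ((r₀v₀ cos φ · D_θ^φ)/h) · i_v + ((r₀ sin φ)/h) · i_θ + (−r₀/h) · i_p. -/
open scoped RealInnerProductSpace

/-- The sensitivity vectors d_r and d_θ of the inertial IIP rate (Eqs. (19)-(20))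
are linearly dependent: D_θ^φ • d_r = D_r^φ • d_θ. -/
theorem sensitivity_vectors_dependent
    {E : Type*} [NormedAddCommGroup E] [InnerProductSpace ℝ E]
    (γ φ : ℝ) (hγ : Real.cos γ ≠ 0)
    (i_r i_v : E) (hr : ‖i_r‖ = 1) (hv : ‖i_v‖ = 1)
    (hrv : ⟪i_r, i_v⟫ = Real.sin γ)
    (r₀ v₀ : ℝ) (hr₀ : 0 < r₀) (hv₀ : 0 < v₀)
    (Dr Dθ : ℝ) :
    let h := r₀ * v₀ * Real.cos γ
    let w := r₀ * v₀ * Real.sin γ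
    let i_θ := (1 / Real.cos γ) • (i_v - Real.sin γ • i_r)
    let i_p := (Real.cos (γ + φ) / Real.cos γ) • i_r + (Real.sin φ / Real.cos γ) • i_v
    let d_r := (1 / h) • ((-((h * Real.sin φ + w * Real.cos φ) * Dr)) • i_r
        + (r₀ * v₀ * Real.cos φ * Dr) • i_v)
    let d_θ := ((r₀ * Real.cos φ - (h * Real.sin φ + w * Real.cos φ) * Dθ) / h) • i_r
        + ((r₀ * v₀ * Real.cos φ * Dθ) / h) • i_v
        + ((r₀ * Real.sin φ) / h) • i_θ + (-(r₀ / h)) • i_p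
    Dθ • d_r = Dr • d_θ := by
  intro h w i_θ i_p d_r d_θ
  simp only [d_r, d_θ, i_θ, i_p, h, w, smul_add, smul_sub, smul_smul]
  match_scalars <;> field_simp <;> ring_nf <;>
    simp [Real.cos_add, Real.sin_add] <;> ring
end
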